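/- arXiv:2111.14328 — 3 statements merged into one kernel-verified Lean document; each statement's English description precedes it below -/
import Mathlib

section
/- Every 3×3 minor of the matrix M vanishes identically after the substitution u = w·p1 + w²·p2, v = w·p3 + w²·p4, t2 = w³ + t1·w. That is, the image of the parametrization map lies in the common vanishing locus of the 3×3 minors of M. -/
open MvPolynomial

/-- Variables: `0=p1, 1=p2, 2=p3, 3=p4, 4=u, 5=v, 6=t1, 7=t2`. -/
noncomputable def matM : Matrix (Fin 3) (Fin 6) (MvPolynomial (Fin 8) ℂ) :=
  Matrix.of
    ![![X 4, X 5, -(X 7 * X 1), -(X 7 * X 3), -(X 7 * X 0) + X 6 * X 4, -(X 7 * X 2) + X 6 * X 5],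
      ![-(X 0), -(X 2), X 4 + X 6 * X 1, X 5 + X 6 * X 3, -(X 7 * X 1), -(X 7 * X 3)],
      ![-(X 1), -(X 3), -(X 0), -(X 2), X 4, X 5]]

/-- The substitution `u = w·p1 + w²·p2`, `v = w·p3 + w²·p4`, `t2 = w³ + t1·w`, into
`ℂ[p1,p2,p3,p4,t1,w]` (variables `0..3 = p1..p4`, `4 = t1`, `5 = w`). -/
noncomputable def subst : Fin 8 → MvPolynomial (Fin 6) ℂ :=
  ![X 0, X 1, X 2, X 3, X 5 * X 0 + X 5 ^ 2 * X 1, X 5 * X 2 + X 5 ^ 2 * X 3, X 4,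
    X 5 ^ 3 + X 4 * X 5]

lemma m00 : matM 0 (⟨0, by omega⟩ : Fin 6) = X 4 := rfl
lemma m01 : matM 0 (⟨1, by omega⟩ : Fin 6) = X 5 := rfl
lemma m02 : matM 0 (⟨2, by omega⟩ : Fin 6) = -(X 7 * X 1) := rfl
lemma m03 : matM 0 (⟨3, by omega⟩ : Fin 6) = -(X 7 * X 3) := rfl
lemma m04 : matM 0 (⟨4, by omega⟩ : Fin 6) = -(X 7 * X 0) + X 6 * X 4 := rfl
lemma m05 : matM 0 (⟨5, by omega⟩ : Fin 6) = -(X 7 * X 2) + X 6 * X 5 := rfl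
lemma m10 : matM 1 (⟨0, by omega⟩ : Fin 6) = -(X 0) := rfl
lemma m11 : matM 1 (⟨1, by omega⟩ : Fin 6) = -(X 2) := rfl
lemma m12 : matM 1 (⟨2, by omega⟩ : Fin 6) = X 4 + X 6 * X 1 := rfl
lemma m13 : matM 1 (⟨3, by omega⟩ : Fin 6) = X 5 + X 6 * X 3 := rfl
lemma m14 : matM 1 (⟨4, by omega⟩ : Fin 6) = -(X 7 * X 1) := rfl
lemma m15 : matM 1 (⟨5, by omega⟩ : Fin 6) = -(X 7 * X 3) := rfl
lemma m20 : matM 2 (⟨0, by omega⟩ : Fin 6) = -(X 1) := rfl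
lemma m21 : matM 2 (⟨1, by omega⟩ : Fin 6) = -(X 3) := rfl
lemma m22 : matM 2 (⟨2, by omega⟩ : Fin 6) = -(X 0) := rfl
lemma m23 : matM 2 (⟨3, by omega⟩ : Fin 6) = -(X 2) := rfl
lemma m24 : matM 2 (⟨4, by omega⟩ : Fin 6) = X 4 := rfl
lemma m25 : matM 2 (⟨5, by omega⟩ : Fin 6) = X 5 := rfl
lemma s0 : subst 0 = X 0 := rfl
lemma s1 : subst 1 = X 1 := rfl
lemma s2 : subst 2 = X 2 := rfl
lemma s3 : subst 3 = X 3 := rfl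
lemma s4 : subst 4 = X 5 * X 0 + X 5 ^ 2 * X 1 := rfl
lemma s5 : subst 5 = X 5 * X 2 + X 5 ^ 2 * X 3 := rfl
lemma s6 : subst 6 = X 4 := rfl
lemma s7 : subst 7 = X 5 ^ 3 + X 4 * X 5 := rfl

lemma rowRel (j : Fin 6) :
    MvPolynomial.aeval subst (matM 0 j) =
      -(X 5 : MvPolynomial (Fin 6) ℂ) * MvPolynomial.aeval subst (matM 1 j)
        - X 5 ^ 2 * MvPolynomial.aeval subst (matM 2 j) := by
  fin_cases j <;>
    simp only [m00, m01, m02, m03, m04, m05, m10, m11, m12, m13, m14, m15, m20, m21, m22, m23, m24, m25, map_add, map_mul, map_neg, map_sub, aeval_X,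
      s0, s1, s2, s3, s4, s5, s6, s7] <;> ring

/-- Every 3×3 minor of `M` vanishes identically after the substitution. -/
theorem stmt1 (c : Fin 3 → Fin 6) :
    MvPolynomial.aeval subst ((matM.submatrix id c).det) = 0 := by
  simp only [Matrix.det_fin_three, Matrix.submatrix_apply, id_eq, map_sub, map_add, map_mul]
  rw [rowRel (c 0), rowRel (c 1), rowRel (c 2)]
  ring
end

section
/- The ideal in ℂ[p1,p2,p3,p4,u,v,t1,t2] generated by all twenty 3×3 minors of the 3×6 matrix M equals the ideal generated by the eight elements D123, D124, D125, D126, D135, D136' := D136 + 2·D145, D245' := D245 + 2·D146, and D246, where Dijk denotes the determinant of the 3×3 submatrix of M on columns i,j,k. -/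
open MvPolynomial

/-- `D i j k` is the determinant of the 3×3 submatrix of `M` on columns `i, j, k`. -/
noncomputable def Dmin (i j k : Fin 6) : MvPolynomial (Fin 8) ℂ :=
  (matM.submatrix id ![i, j, k]).det

noncomputable def I8 : Ideal (MvPolynomial (Fin 8) ℂ) :=
    Ideal.span {Dmin 0 1 2, Dmin 0 1 3, Dmin 0 1 4, Dmin 0 1 5, Dmin 0 2 4,
        Dmin 0 2 5 + 2 * Dmin 0 3 4, Dmin 1 3 4 + 2 * Dmin 0 3 5, Dmin 1 3 5}

@[simp] lemma vec6_four {α} (a b c d e f : α) : ![a,b,c,d,e,f] 4 = e := rfl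
@[simp] lemma vec6_five {α} (a b c d e f : α) : ![a,b,c,d,e,f] 5 = f := rfl

lemma mem_of_scale {I : Ideal (MvPolynomial (Fin 8) ℂ)} {x : MvPolynomial (Fin 8) ℂ} (n : ℕ)
    (hn : (n:ℂ) ≠ 0) (h : (n : MvPolynomial (Fin 8) ℂ) * x ∈ I) : x ∈ I := by
  have h2 := I.mul_mem_left (C (n:ℂ)⁻¹) h
  rwa [show ((n : MvPolynomial (Fin 8) ℂ)) = C (n:ℂ) by simp, ← mul_assoc, ← C_mul,
    inv_mul_cancel₀ hn, map_one, one_mul] at h2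

lemma hg0 : Dmin 0 1 2 ∈ I8 := Ideal.subset_span (by simp [I8])

lemma hg1 : Dmin 0 1 3 ∈ I8 := Ideal.subset_span (by simp [I8])

lemma hg2 : Dmin 0 1 4 ∈ I8 := Ideal.subset_span (by simp [I8])

lemma hg3 : Dmin 0 1 5 ∈ I8 := Ideal.subset_span (by simp [I8])

lemma hg4 : Dmin 0 2 4 ∈ I8 := Ideal.subset_span (by simp [I8])

lemma hg5 : Dmin 0 2 5 + 2 * Dmin 0 3 4 ∈ I8 := Ideal.subset_span (by simp [I8])

lemma hg6 : Dmin 1 3 4 + 2 * Dmin 0 3 5 ∈ I8 := Ideal.subset_span (by simp [I8])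

lemma hg7 : Dmin 1 3 5 ∈ I8 := Ideal.subset_span (by simp [I8])

lemma m012 : Dmin 0 1 2 ∈ I8 := by
  apply mem_of_scale 1 (by norm_num)
  have hid : (((1 : ℕ)) : MvPolynomial (Fin 8) ℂ) * Dmin 0 1 2 = ((1 : MvPolynomial (Fin 8) ℂ)) * Dmin 0 1 2 := by
    simp [Dmin, matM, Matrix.det_fin_three] <;> ring
  rw [hid]
  exact (Ideal.mul_mem_left _ _ hg0)

lemma m013 : Dmin 0 1 3 ∈ I8 := by
  apply mem_of_scale 1 (by norm_num)
  have hid : (((1 : ℕ)) : MvPolynomial (Fin 8) ℂ) * Dmin 0 1 3 = ((1 : MvPolynomial (Fin 8) ℂ)) * Dmin 0 1 3 := by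
    simp [Dmin, matM, Matrix.det_fin_three] <;> ring
  rw [hid]
  exact (Ideal.mul_mem_left _ _ hg1)

lemma m014 : Dmin 0 1 4 ∈ I8 := by
  apply mem_of_scale 1 (by norm_num)
  have hid : (((1 : ℕ)) : MvPolynomial (Fin 8) ℂ) * Dmin 0 1 4 = ((1 : MvPolynomial (Fin 8) ℂ)) * Dmin 0 1 4 := by
    simp [Dmin, matM, Matrix.det_fin_three] <;> ring
  rw [hid]
  exact (Ideal.mul_mem_left _ _ hg2)

lemma m015 : Dmin 0 1 5 ∈ I8 := by
  apply mem_of_scale 1 (by norm_num)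
  have hid : (((1 : ℕ)) : MvPolynomial (Fin 8) ℂ) * Dmin 0 1 5 = ((1 : MvPolynomial (Fin 8) ℂ)) * Dmin 0 1 5 := by
    simp [Dmin, matM, Matrix.det_fin_three] <;> ring
  rw [hid]
  exact (Ideal.mul_mem_left _ _ hg3)

lemma m023 : Dmin 0 2 3 ∈ I8 := by
  apply mem_of_scale 1 (by norm_num)
  have hid : (((1 : ℕ)) : MvPolynomial (Fin 8) ℂ) * Dmin 0 2 3 = ((1 : MvPolynomial (Fin 8) ℂ)) * Dmin 0 1 4 := by
    simp [Dmin, matM, Matrix.det_fin_three] <;> ring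
  rw [hid]
  exact (Ideal.mul_mem_left _ _ hg2)

lemma m024 : Dmin 0 2 4 ∈ I8 := by
  apply mem_of_scale 1 (by norm_num)
  have hid : (((1 : ℕ)) : MvPolynomial (Fin 8) ℂ) * Dmin 0 2 4 = ((1 : MvPolynomial (Fin 8) ℂ)) * Dmin 0 2 4 := by
    simp [Dmin, matM, Matrix.det_fin_three] <;> ring
  rw [hid]
  exact (Ideal.mul_mem_left _ _ hg4)

lemma m025 : Dmin 0 2 5 ∈ I8 := by
  apply mem_of_scale 3 (by norm_num)
  have hid : (((3 : ℕ)) : MvPolynomial (Fin 8) ℂ) * Dmin 0 2 5 = ((-2 : MvPolynomial (Fin 8) ℂ) * X 6) * Dmin 0 1 2 + ((1 : MvPolynomial (Fin 8) ℂ)) * (Dmin 0 2 5 + 2 * Dmin 0 3 4) := by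
    simp [Dmin, matM, Matrix.det_fin_three] <;> ring
  rw [hid]
  exact (add_mem (Ideal.mul_mem_left _ _ hg0) (Ideal.mul_mem_left _ _ hg5))

lemma m034 : Dmin 0 3 4 ∈ I8 := by
  apply mem_of_scale 3 (by norm_num)
  have hid : (((3 : ℕ)) : MvPolynomial (Fin 8) ℂ) * Dmin 0 3 4 = (X 6) * Dmin 0 1 2 + ((1 : MvPolynomial (Fin 8) ℂ)) * (Dmin 0 2 5 + 2 * Dmin 0 3 4) := by
    simp [Dmin, matM, Matrix.det_fin_three] <;> ring
  rw [hid]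
  exact (add_mem (Ideal.mul_mem_left _ _ hg0) (Ideal.mul_mem_left _ _ hg5))

lemma m035 : Dmin 0 3 5 ∈ I8 := by
  apply mem_of_scale 3 (by norm_num)
  have hid : (((3 : ℕ)) : MvPolynomial (Fin 8) ℂ) * Dmin 0 3 5 = ((-1 : MvPolynomial (Fin 8) ℂ) * X 6) * Dmin 0 1 3 + ((1 : MvPolynomial (Fin 8) ℂ)) * (Dmin 1 3 4 + 2 * Dmin 0 3 5) := by
    simp [Dmin, matM, Matrix.det_fin_three] <;> ring
  rw [hid]
  exact (add_mem (Ideal.mul_mem_left _ _ hg1) (Ideal.mul_mem_left _ _ hg6))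

lemma m045 : Dmin 0 4 5 ∈ I8 := by
  apply mem_of_scale 1 (by norm_num)
  have hid : (((1 : ℕ)) : MvPolynomial (Fin 8) ℂ) * Dmin 0 4 5 = (X 7) * Dmin 0 1 2 := by
    simp [Dmin, matM, Matrix.det_fin_three] <;> ring
  rw [hid]
  exact (Ideal.mul_mem_left _ _ hg0)

lemma m123 : Dmin 1 2 3 ∈ I8 := by
  apply mem_of_scale 1 (by norm_num)
  have hid : (((1 : ℕ)) : MvPolynomial (Fin 8) ℂ) * Dmin 1 2 3 = ((1 : MvPolynomial (Fin 8) ℂ)) * Dmin 0 1 5 := by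
    simp [Dmin, matM, Matrix.det_fin_three] <;> ring
  rw [hid]
  exact (Ideal.mul_mem_left _ _ hg3)

lemma m124 : Dmin 1 2 4 ∈ I8 := by
  apply mem_of_scale 3 (by norm_num)
  have hid : (((3 : ℕ)) : MvPolynomial (Fin 8) ℂ) * Dmin 1 2 4 = (X 6) * Dmin 0 1 2 + ((1 : MvPolynomial (Fin 8) ℂ)) * (Dmin 0 2 5 + 2 * Dmin 0 3 4) := by
    simp [Dmin, matM, Matrix.det_fin_three] <;> ring
  rw [hid]
  exact (add_mem (Ideal.mul_mem_left _ _ hg0) (Ideal.mul_mem_left _ _ hg5))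

lemma m125 : Dmin 1 2 5 ∈ I8 := by
  apply mem_of_scale 3 (by norm_num)
  have hid : (((3 : ℕ)) : MvPolynomial (Fin 8) ℂ) * Dmin 1 2 5 = ((-1 : MvPolynomial (Fin 8) ℂ) * X 6) * Dmin 0 1 3 + ((1 : MvPolynomial (Fin 8) ℂ)) * (Dmin 1 3 4 + 2 * Dmin 0 3 5) := by
    simp [Dmin, matM, Matrix.det_fin_three] <;> ring
  rw [hid]
  exact (add_mem (Ideal.mul_mem_left _ _ hg1) (Ideal.mul_mem_left _ _ hg6))

lemma m134 : Dmin 1 3 4 ∈ I8 := by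
  apply mem_of_scale 3 (by norm_num)
  have hid : (((3 : ℕ)) : MvPolynomial (Fin 8) ℂ) * Dmin 1 3 4 = ((2 : MvPolynomial (Fin 8) ℂ) * X 6) * Dmin 0 1 3 + ((1 : MvPolynomial (Fin 8) ℂ)) * (Dmin 1 3 4 + 2 * Dmin 0 3 5) := by
    simp [Dmin, matM, Matrix.det_fin_three] <;> ring
  rw [hid]
  exact (add_mem (Ideal.mul_mem_left _ _ hg1) (Ideal.mul_mem_left _ _ hg6))

lemma m135 : Dmin 1 3 5 ∈ I8 := by
  apply mem_of_scale 1 (by norm_num)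
  have hid : (((1 : ℕ)) : MvPolynomial (Fin 8) ℂ) * Dmin 1 3 5 = ((1 : MvPolynomial (Fin 8) ℂ)) * Dmin 1 3 5 := by
    simp [Dmin, matM, Matrix.det_fin_three] <;> ring
  rw [hid]
  exact (Ideal.mul_mem_left _ _ hg7)

lemma m145 : Dmin 1 4 5 ∈ I8 := by
  apply mem_of_scale 1 (by norm_num)
  have hid : (((1 : ℕ)) : MvPolynomial (Fin 8) ℂ) * Dmin 1 4 5 = (X 7) * Dmin 0 1 3 := by
    simp [Dmin, matM, Matrix.det_fin_three] <;> ring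
  rw [hid]
  exact (Ideal.mul_mem_left _ _ hg1)

lemma m234 : Dmin 2 3 4 ∈ I8 := by
  apply mem_of_scale 1 (by norm_num)
  have hid : (((1 : ℕ)) : MvPolynomial (Fin 8) ℂ) * Dmin 2 3 4 = (X 7) * Dmin 0 1 2 + (X 6) * Dmin 0 1 4 := by
    simp [Dmin, matM, Matrix.det_fin_three] <;> ring
  rw [hid]
  exact (add_mem (Ideal.mul_mem_left _ _ hg0) (Ideal.mul_mem_left _ _ hg2))

lemma m235 : Dmin 2 3 5 ∈ I8 := by
  apply mem_of_scale 1 (by norm_num)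
  have hid : (((1 : ℕ)) : MvPolynomial (Fin 8) ℂ) * Dmin 2 3 5 = (X 7) * Dmin 0 1 3 + (X 6) * Dmin 0 1 5 := by
    simp [Dmin, matM, Matrix.det_fin_three] <;> ring
  rw [hid]
  exact (add_mem (Ideal.mul_mem_left _ _ hg1) (Ideal.mul_mem_left _ _ hg3))

lemma m245 : Dmin 2 4 5 ∈ I8 := by
  apply mem_of_scale 1 (by norm_num)
  have hid : (((1 : ℕ)) : MvPolynomial (Fin 8) ℂ) * Dmin 2 4 5 = (X 7) * Dmin 0 1 4 := by
    simp [Dmin, matM, Matrix.det_fin_three] <;> ring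
  rw [hid]
  exact (Ideal.mul_mem_left _ _ hg2)

lemma m345 : Dmin 3 4 5 ∈ I8 := by
  apply mem_of_scale 1 (by norm_num)
  have hid : (((1 : ℕ)) : MvPolynomial (Fin 8) ℂ) * Dmin 3 4 5 = (X 7) * Dmin 0 1 5 := by
    simp [Dmin, matM, Matrix.det_fin_three] <;> ring
  rw [hid]
  exact (Ideal.mul_mem_left _ _ hg3)

set_option maxRecDepth 100000 in
lemma strictMono_cases (c : Fin 3 → Fin 6) (hc : StrictMono c) :
    c = ![0,1,2] ∨ c = ![0,1,3] ∨ c = ![0,1,4] ∨ c = ![0,1,5] ∨ c = ![0,2,3] ∨ c = ![0,2,4] ∨ c = ![0,2,5] ∨ c = ![0,3,4] ∨ c = ![0,3,5] ∨ c = ![0,4,5] ∨ c = ![1,2,3] ∨ c = ![1,2,4] ∨ c = ![1,2,5] ∨ c = ![1,3,4] ∨ c = ![1,3,5] ∨ c = ![1,4,5] ∨ c = ![2,3,4] ∨ c = ![2,3,5] ∨ c = ![2,4,5] ∨ c = ![3,4,5] := by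
  revert hc; revert c; decide

/-- The ideal of all 3×3 minors of `M` is generated by the eight elements
`D123, D124, D125, D126, D135, D136' = D136 + 2 D145, D245' = D245 + 2 D146, D246`
(columns are numbered `1..6` in the paper, `0..5` here). -/
theorem stmt2 :
    Ideal.span {d : MvPolynomial (Fin 8) ℂ |
        ∃ c : Fin 3 → Fin 6, StrictMono c ∧ d = (matM.submatrix id c).det} =
    Ideal.span {Dmin 0 1 2, Dmin 0 1 3, Dmin 0 1 4, Dmin 0 1 5, Dmin 0 2 4,
        Dmin 0 2 5 + 2 * Dmin 0 3 4, Dmin 1 3 4 + 2 * Dmin 0 3 5, Dmin 1 3 5} := by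
  apply le_antisymm
  · rw [Ideal.span_le]
    rintro d ⟨c, hc, rfl⟩
    rcases strictMono_cases c hc with h|h|h|h|h|h|h|h|h|h|h|h|h|h|h|h|h|h|h|h <;> subst h
    · exact m012
    · exact m013
    · exact m014
    · exact m015
    · exact m023
    · exact m024
    · exact m025
    · exact m034
    · exact m035
    · exact m045
    · exact m123
    · exact m124
    · exact m125
    · exact m134
    · exact m135
    · exact m145
    · exact m234
    · exact m235
    · exact m245
    · exact m345
  · rw [Ideal.span_le]
    rintro d hd
    simp only [Set.mem_insert_iff, Set.mem_singleton_iff] at hd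
    have hm : ∀ i j k : Fin 6, StrictMono ![i,j,k] → Dmin i j k ∈
        Ideal.span {d : MvPolynomial (Fin 8) ℂ |
          ∃ c : Fin 3 → Fin 6, StrictMono c ∧ d = (matM.submatrix id c).det} :=
      fun i j k h => Ideal.subset_span ⟨![i,j,k], h, rfl⟩
    rcases hd with rfl|rfl|rfl|rfl|rfl|rfl|rfl|rfl
    · exact hm 0 1 2 (by decide)
    · exact hm 0 1 3 (by decide)
    · exact hm 0 1 4 (by decide)
    · exact hm 0 1 5 (by decide)
    · exact hm 0 2 4 (by decide)
    · exact add_mem (hm 0 2 5 (by decide)) (Ideal.mul_mem_left _ _ (hm 0 3 4 (by decide)))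
    · exact add_mem (hm 1 3 4 (by decide)) (Ideal.mul_mem_left _ _ (hm 0 3 5 (by decide)))
    · exact hm 1 3 5 (by decide)
end

section
/- From the relation (f1 w − f2)·p1 + (f1 w² − f3)·p2 = 0 and (f1 w − f2)·p3 + (f1 w² − f3)·p4 = 0 in the polynomial ring ℂ[p1,p2,p3,p4,t1,w], one deduces there exist A, B with f1 w − f2 = p2·A = p4·B and f1 w² − f3 = −p1·A = −p3·B, and consequently A = B = 0. -/
open MvPolynomial

private lemma primeX (i : Fin 6) : Prime (X i : MvPolynomial (Fin 6) ℂ) := by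
  let e := (renameEquiv ℂ (Equiv.swap i 0)).trans (finSuccEquiv ℂ 5)
  rw [← MulEquiv.prime_iff e.toMulEquiv]
  show Prime (e (X i))
  have he : e (X i) = Polynomial.X := by
    simp [e, renameEquiv_apply, rename_X, Equiv.swap_apply_left, finSuccEquiv_X_zero]
  rw [he]
  exact Polynomial.prime_X

private lemma Xdvd (i j : Fin 6) (p : MvPolynomial (Fin 6) ℂ)
    (hij : i ≠ j) (h : X i ∣ p * X j) : X i ∣ p := by
  rcases (primeX i).dvd_mul.mp h with h' | h'
  · exact h'
  · exact absurd (X_dvd_X.mp h') hij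

/-- In `ℂ[p1,p2,p3,p4,t1,w]` (variables `0..3 = p1..p4`, `4 = t1`, `5 = w`):
from `(f1·w − f2)·p1 + (f1·w² − f3)·p2 = 0` and `(f1·w − f2)·p3 + (f1·w² − f3)·p4 = 0`
one deduces that there exist `A, B` with `f1·w − f2 = p2·A = p4·B` and
`f1·w² − f3 = −p1·A = −p3·B`, and consequently `A = B = 0`. -/
theorem stmt5 (f1 f2 f3 : MvPolynomial (Fin 6) ℂ)
    (h1 : (f1 * X 5 - f2) * X 0 + (f1 * X 5 ^ 2 - f3) * X 1 = 0)
    (h2 : (f1 * X 5 - f2) * X 2 + (f1 * X 5 ^ 2 - f3) * X 3 = 0) :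
    ∃ A B : MvPolynomial (Fin 6) ℂ,
      f1 * X 5 - f2 = X 1 * A ∧ f1 * X 5 ^ 2 - f3 = -(X 0 * A) ∧
      f1 * X 5 - f2 = X 3 * B ∧ f1 * X 5 ^ 2 - f3 = -(X 2 * B) ∧
      A = 0 ∧ B = 0 := by
  set u := f1 * X 5 - f2 with hu
  set v := f1 * X 5 ^ 2 - f3 with hv
  -- divisibilities
  have d1 : (X 1 : MvPolynomial (Fin 6) ℂ) ∣ u := by
    apply Xdvd 1 0 u (by decide)
    exact ⟨-v, by linear_combination h1⟩
  have d0 : (X 0 : MvPolynomial (Fin 6) ℂ) ∣ v := by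
    apply Xdvd 0 1 v (by decide)
    exact ⟨-u, by linear_combination h1⟩
  have d3 : (X 3 : MvPolynomial (Fin 6) ℂ) ∣ u := by
    apply Xdvd 3 2 u (by decide)
    exact ⟨-v, by linear_combination h2⟩
  have d2 : (X 2 : MvPolynomial (Fin 6) ℂ) ∣ v := by
    apply Xdvd 2 3 v (by decide)
    exact ⟨-u, by linear_combination h2⟩
  obtain ⟨a1, ha1⟩ := d1
  have d3' : (X 3 : MvPolynomial (Fin 6) ℂ) ∣ a1 := by
    rcases (primeX 3).dvd_mul.mp (ha1 ▸ d3) with h' | h'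
    · exact absurd (X_dvd_X.mp h') (by decide)
    · exact h'
  obtain ⟨a, ha⟩ := d3'
  obtain ⟨b1, hb1⟩ := d0
  have d2' : (X 2 : MvPolynomial (Fin 6) ℂ) ∣ b1 := by
    rcases (primeX 2).dvd_mul.mp (hb1 ▸ d2) with h' | h'
    · exact absurd (X_dvd_X.mp h') (by decide)
    · exact h'
  obtain ⟨b, hb⟩ := d2'
  have hua : u = X 1 * (X 3 * a) := by rw [ha1, ha]
  have hvb : v = X 0 * (X 2 * b) := by rw [hb1, hb]
  have hne : ∀ i : Fin 6, (X i : MvPolynomial (Fin 6) ℂ) ≠ 0 := fun i => X_ne_zero i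
  have e1 : X 3 * a + X 2 * b = 0 := by
    have : (X 0 * X 1 : MvPolynomial (Fin 6) ℂ) * (X 3 * a + X 2 * b) = 0 := by
      linear_combination h1 - X 0 * hua - X 1 * hvb
    rcases mul_eq_zero.mp this with h' | h'
    · exact absurd h' (mul_ne_zero (hne 0) (hne 1))
    · exact h'
  have e2 : X 1 * a + X 0 * b = 0 := by
    have : (X 2 * X 3 : MvPolynomial (Fin 6) ℂ) * (X 1 * a + X 0 * b) = 0 := by
      linear_combination h2 - X 2 * hua - X 3 * hvb
    rcases mul_eq_zero.mp this with h' | h'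
    · exact absurd h' (mul_ne_zero (hne 2) (hne 3))
    · exact h'
  have dca : (X 2 : MvPolynomial (Fin 6) ℂ) ∣ a := by
    apply Xdvd 2 3 a (by decide)
    exact ⟨-b, by linear_combination e1⟩
  obtain ⟨c, hc⟩ := dca
  have hbc : b = -(X 3 * c) := by
    have : (X 2 : MvPolynomial (Fin 6) ℂ) * (b + X 3 * c) = 0 := by
      linear_combination e1 - X 3 * hc
    rcases mul_eq_zero.mp this with h' | h'
    · exact absurd h' (hne 2)
    · linear_combination h'
  have hkey : (X 1 * X 2 - X 0 * X 3 : MvPolynomial (Fin 6) ℂ) ≠ 0 := by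
    intro h
    have h' := congrArg (eval (fun j : Fin 6 => if j = 0 then (0:ℂ) else 1)) h
    simp [eval_X] at h'
  have hc0 : c = 0 := by
    have : (X 1 * X 2 - X 0 * X 3 : MvPolynomial (Fin 6) ℂ) * c = 0 := by
      linear_combination e2 - X 1 * hc - X 0 * hbc
    rcases mul_eq_zero.mp this with h' | h'
    · exact absurd h' hkey
    · exact h'
  have ha0 : a = 0 := by rw [hc, hc0, mul_zero]
  have hb0 : b = 0 := by rw [hbc, hc0, mul_zero, neg_zero]
  refine ⟨0, 0, ?_, ?_, ?_, ?_, rfl, rfl⟩ <;>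
    simp [← hu, ← hv, hua, hvb, ha0, hb0]
end
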